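/- Let Π : V* → V be skew, R ⊆ V a subspace, L := graph(Π) = {(Πξ, ξ)}, and S := {0} ⊕ R°. Then the stretching L^S := (L ∩ S^⊥) + S satisfies L^S ∩ (V ⊕ {0}) = (Π(R°) ∩ R) ⊕ {0}. Consequently, L^S is the graph of a (skew) linear map V* → V if and only if Π(R°) ∩ R = {0}. -/
import Mathlib


/-- The canonical symmetric pairing on `V ⊕ V*`:
`⟨(X,ξ),(Y,η)⟩ = ½ (ξ(Y) + η(X))`. -/
noncomputable def pairVD (V : Type*) [AddCommGroup V] [Module ℝ V] :
    (V × Module.Dual ℝ V) →ₗ[ℝ] (V × Module.Dual ℝ V) →ₗ[ℝ] ℝ :=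
  LinearMap.mk₂ ℝ (fun p q => (p.2 q.1 + q.2 p.1) / 2)
    (by intro m m' n; simp; ring)
    (by intro c m n; simp; ring)
    (by intro m n n'; simp; ring)
    (by intro c m n; simp; ring)

/-- The orthogonal of a subspace of `V ⊕ V*` with respect to the canonical pairing. -/
noncomputable def perpVD {V : Type*} [AddCommGroup V] [Module ℝ V]
    (A : Submodule ℝ (V × Module.Dual ℝ V)) : Submodule ℝ (V × Module.Dual ℝ V) where
  carrier := {e | ∀ a ∈ A, pairVD V e a = 0}
  add_mem' := by
    intro x y hx hy a ha
    simp only [Set.mem_setOf_eq] at *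
    rw [map_add, LinearMap.add_apply, hx a ha, hy a ha, add_zero]
  zero_mem' := by
    intro a ha
    simp
  smul_mem' := by
    intro c x hx a ha
    simp only [Set.mem_setOf_eq] at *
    rw [map_smul, LinearMap.smul_apply, hx a ha, smul_zero]


section Helpers

variable {V : Type*} [AddCommGroup V] [Module ℝ V]

lemma pairVD_apply (p q : V × Module.Dual ℝ V) :
    pairVD V p q = (p.2 q.1 + q.2 p.1) / 2 := rfl

lemma mem_perp_prod_aux (R : Submodule ℝ V) (x : V) (ξ : Module.Dual ℝ V) :
    (x, ξ) ∈ perpVD ((⊥ : Submodule ℝ V).prod R.dualAnnihilator) ↔ x ∈ R := by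
  constructor
  · intro h
    rw [← Subspace.dualAnnihilator_dualCoannihilator_eq (W := R),
      Submodule.mem_dualCoannihilator]
    intro φ hφ
    have h0 := h (0, φ) (by simp [Submodule.mem_prod, hφ])
    rw [pairVD_apply] at h0
    simp at h0
    linarith
  · intro hx a ha
    rw [Submodule.mem_prod] at ha
    have h1 : a.1 = 0 := by simpa using ha.1
    have h2 : a.2 x = 0 := (Submodule.mem_dualAnnihilator _).mp ha.2 x hx
    rw [pairVD_apply, h1]
    simp [h2]

lemma mem_graph_aux (Pi : Module.Dual ℝ V →ₗ[ℝ] V) (x : V) (ξ : Module.Dual ℝ V) :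
    (x, ξ) ∈ LinearMap.range
      (Pi.prod (LinearMap.id : Module.Dual ℝ V →ₗ[ℝ] Module.Dual ℝ V)) ↔ x = Pi ξ := by
  constructor
  · rintro ⟨η, hη⟩
    have h2 : η = ξ := congrArg Prod.snd hη
    have h1 : Pi η = x := congrArg Prod.fst hη
    rw [← h1, h2]
  · intro h
    exact ⟨ξ, by simp [LinearMap.prod_apply, h]⟩

lemma mem_K_aux (Pi : Module.Dual ℝ V →ₗ[ℝ] V) (R : Submodule ℝ V)
    (x : V) (ξ : Module.Dual ℝ V) :
    (x, ξ) ∈ (LinearMap.range (Pi.prod (LinearMap.id : Module.Dual ℝ V →ₗ[ℝ] Module.Dual ℝ V)) ⊓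
          perpVD ((⊥ : Submodule ℝ V).prod R.dualAnnihilator)) ⊔
        (⊥ : Submodule ℝ V).prod R.dualAnnihilator ↔
      ∃ η : Module.Dual ℝ V, x = Pi η ∧ Pi η ∈ R ∧ ξ - η ∈ R.dualAnnihilator := by
  rw [Submodule.mem_sup]
  constructor
  · rintro ⟨a, ha, b, hb, hab⟩
    obtain ⟨haL, haP⟩ := ha
    obtain ⟨η, hη⟩ := haL
    rw [Submodule.mem_prod] at hb
    have hb1 : b.1 = 0 := by simpa using hb.1
    have ha1 : a.1 = Pi η := (congrArg Prod.fst hη).symm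
    have ha2 : a.2 = η := by
      have := congrArg Prod.snd hη; simpa using this.symm
    refine ⟨η, ?_, ?_, ?_⟩
    · have := congrArg Prod.fst hab
      simp only [Prod.fst_add, ha1, hb1, add_zero] at this
      exact this.symm
    · have : (a.1, a.2) ∈ perpVD ((⊥ : Submodule ℝ V).prod R.dualAnnihilator) := haP
      rw [mem_perp_prod_aux] at this
      rwa [ha1] at this
    · have hx2 : ξ = η + b.2 := by
        have := congrArg Prod.snd hab
        simp only [Prod.snd_add, ha2] at this
        exact this.symm
      rw [hx2]
      simpa using hb.2
  · rintro ⟨η, hx, hR, hann⟩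
    refine ⟨(Pi η, η), ⟨⟨η, rfl⟩, ?_⟩, (0, ξ - η), ?_, ?_⟩
    · exact (mem_perp_prod_aux R (Pi η) η).mpr hR
    · rw [Submodule.mem_prod]; exact ⟨Submodule.zero_mem _, hann⟩
    · rw [Prod.ext_iff]; constructor <;> simp [hx.symm]

end Helpers

/-- Let `Pi : V* → V` be skew, `R ⊆ V` a subspace, `L := graph(Pi)` and
`S := {0} ⊕ R°`. Then the stretching `L^S := (L ∩ S^⊥) + S` satisfies
`L^S ∩ (V ⊕ {0}) = (Pi(R°) ∩ R) ⊕ {0}`. Consequently, `L^S` is the graph of a (skew)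
linear map `V* → V` if and only if `Pi(R°) ∩ R = {0}`. -/
theorem stretching_of_graph_along_annihilator
    {V : Type*} [AddCommGroup V] [Module ℝ V] [FiniteDimensional ℝ V]
    (Pi : Module.Dual ℝ V →ₗ[ℝ] V)
    (hskew : ∀ ξ η : Module.Dual ℝ V, ξ (Pi η) = - η (Pi ξ))
    (R : Submodule ℝ V) :
    ((LinearMap.range (Pi.prod (LinearMap.id : Module.Dual ℝ V →ₗ[ℝ] Module.Dual ℝ V)) ⊓
          perpVD ((⊥ : Submodule ℝ V).prod R.dualAnnihilator)) ⊔
        (⊥ : Submodule ℝ V).prod R.dualAnnihilator) ⊓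
        (⊤ : Submodule ℝ V).prod (⊥ : Submodule ℝ (Module.Dual ℝ V)) =
      (R.dualAnnihilator.map Pi ⊓ R).prod (⊥ : Submodule ℝ (Module.Dual ℝ V)) ∧
    ((∃ Pi' : Module.Dual ℝ V →ₗ[ℝ] V,
        (∀ ξ η : Module.Dual ℝ V, ξ (Pi' η) = - η (Pi' ξ)) ∧
          (LinearMap.range (Pi.prod (LinearMap.id : Module.Dual ℝ V →ₗ[ℝ] Module.Dual ℝ V)) ⊓
              perpVD ((⊥ : Submodule ℝ V).prod R.dualAnnihilator)) ⊔
            (⊥ : Submodule ℝ V).prod R.dualAnnihilator =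
            LinearMap.range (Pi'.prod (LinearMap.id : Module.Dual ℝ V →ₗ[ℝ] Module.Dual ℝ V))) ↔
      R.dualAnnihilator.map Pi ⊓ R = ⊥) := by
  set K : Submodule ℝ (V × Module.Dual ℝ V) :=
    (LinearMap.range (Pi.prod (LinearMap.id : Module.Dual ℝ V →ₗ[ℝ] Module.Dual ℝ V)) ⊓
        perpVD ((⊥ : Submodule ℝ V).prod R.dualAnnihilator)) ⊔
      (⊥ : Submodule ℝ V).prod R.dualAnnihilator with hK
  have hmemK : ∀ (x : V) (ξ : Module.Dual ℝ V), (x, ξ) ∈ K ↔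
      ∃ η : Module.Dual ℝ V, x = Pi η ∧ Pi η ∈ R ∧ ξ - η ∈ R.dualAnnihilator :=
    fun x ξ => mem_K_aux Pi R x ξ
  -- Part 1
  have part1 : K ⊓ (⊤ : Submodule ℝ V).prod (⊥ : Submodule ℝ (Module.Dual ℝ V)) =
      (R.dualAnnihilator.map Pi ⊓ R).prod (⊥ : Submodule ℝ (Module.Dual ℝ V)) := by
    ext ⟨x, ξ⟩
    rw [Submodule.mem_inf, Submodule.mem_prod, Submodule.mem_prod, hmemK]
    constructor
    · rintro ⟨⟨η, hx, hR, hann⟩, -, hξ⟩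
      have hξ0 : ξ = 0 := by simpa using hξ
      subst hξ0
      have hnη : -η ∈ R.dualAnnihilator := by simpa using hann
      have hη : η ∈ R.dualAnnihilator := by simpa using neg_mem hnη
      refine ⟨Submodule.mem_inf.mpr ⟨?_, hx ▸ hR⟩, by simp⟩
      exact hx ▸ Submodule.mem_map_of_mem hη
    · rintro ⟨hx, hξ⟩
      have hξ0 : ξ = 0 := by simpa using hξ
      subst hξ0
      obtain ⟨hmap, hR⟩ := Submodule.mem_inf.mp hx
      obtain ⟨η, hη, hPη⟩ := Submodule.mem_map.mp hmap
      refine ⟨⟨η, hPη.symm, hPη.symm ▸ hR, ?_⟩, trivial, by simp⟩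
      simpa using neg_mem hη
  refine ⟨part1, ?_, ?_⟩
  · -- graph ⇒ trivial intersection
    rintro ⟨Pi', -, hgr⟩
    rw [eq_bot_iff]
    intro x hx
    have hmem : ((x, (0 : Module.Dual ℝ V)) : V × Module.Dual ℝ V) ∈
        K ⊓ (⊤ : Submodule ℝ V).prod (⊥ : Submodule ℝ (Module.Dual ℝ V)) := by
      rw [part1, Submodule.mem_prod]
      exact ⟨hx, by simp⟩
    have hKm : ((x, (0 : Module.Dual ℝ V)) : V × Module.Dual ℝ V) ∈ K :=
      (Submodule.mem_inf.mp hmem).1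
    rw [hgr] at hKm
    have := (mem_graph_aux Pi' x 0).mp hKm
    simp only [map_zero] at this
    simpa using this
  · -- trivial intersection ⇒ graph
    intro hinf
    -- splitting lemma
    have hsplit : ∀ ξ : Module.Dual ℝ V,
        ∃ η, Pi η ∈ R ∧ ξ - η ∈ R.dualAnnihilator := by
      intro ξ
      have htop : (R.dualAnnihilator.map Pi).dualAnnihilator ⊔ R.dualAnnihilator =
          (⊤ : Submodule ℝ (Module.Dual ℝ V)) := by
        rw [← Subspace.dualAnnihilator_inf_eq, hinf, Submodule.dualAnnihilator_bot]
      have hξ : ξ ∈ (R.dualAnnihilator.map Pi).dualAnnihilator ⊔ R.dualAnnihilator := by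
        rw [htop]; trivial
      obtain ⟨α, hα, β, hβ, hs⟩ := Submodule.mem_sup.mp hξ
      refine ⟨α, ?_, ?_⟩
      · rw [← Subspace.dualAnnihilator_dualCoannihilator_eq (W := R),
          Submodule.mem_dualCoannihilator]
        intro φ hφ
        have h0 : α (Pi φ) = 0 :=
          (Submodule.mem_dualAnnihilator _).mp hα (Pi φ) (Submodule.mem_map_of_mem hφ)
        rw [hskew φ α, h0, neg_zero]
      · have hβ' : ξ - α = β := by rw [← hs]; abel
        rwa [hβ']
    -- isotropy of K
    have hiso : ∀ p ∈ K, ∀ q ∈ K, pairVD V p q = 0 := by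
      rintro ⟨x, ξ⟩ hp ⟨y, η⟩ hq
      obtain ⟨a, hx, haR, haD⟩ := (hmemK x ξ).mp hp
      obtain ⟨b, hy, hbR, hbD⟩ := (hmemK y η).mp hq
      have h1 : (ξ - a) (Pi b) = 0 := (Submodule.mem_dualAnnihilator _).mp haD _ hbR
      have h2 : (η - b) (Pi a) = 0 := (Submodule.mem_dualAnnihilator _).mp hbD _ haR
      have h3 : a (Pi b) = - b (Pi a) := hskew a b
      simp only [LinearMap.sub_apply] at h1 h2
      rw [pairVD_apply]
      show (ξ y + η x) / 2 = 0
      rw [hx, hy]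
      have : ξ (Pi b) + η (Pi a) = 0 := by linarith
      rw [this]; norm_num
    -- the projection to the second factor
    let p2 : K →ₗ[ℝ] Module.Dual ℝ V :=
      (LinearMap.snd ℝ V (Module.Dual ℝ V)).comp K.subtype
    have hp2 : ∀ k : K, p2 k = (k : V × Module.Dual ℝ V).2 := fun _ => rfl
    have hinj : Function.Injective p2 := by
      intro a b hab
      have hsub : ((a : V × Module.Dual ℝ V) - b).2 = 0 := by
        simp only [Prod.snd_sub]
        rw [← hp2 a, ← hp2 b, hab, sub_self]
      have hKsub : ((a : V × Module.Dual ℝ V) - b) ∈ K := sub_mem a.2 b.2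
      have hfst : ((a : V × Module.Dual ℝ V) - b).1 = 0 := by
        have hmem : ((a : V × Module.Dual ℝ V) - b) ∈
            K ⊓ (⊤ : Submodule ℝ V).prod (⊥ : Submodule ℝ (Module.Dual ℝ V)) :=
          Submodule.mem_inf.mpr ⟨hKsub, Submodule.mem_prod.mpr ⟨trivial, by simp [hsub]⟩⟩
        rw [part1, Submodule.mem_prod, hinf] at hmem
        simpa using hmem.1
      have : (a : V × Module.Dual ℝ V) - b = 0 := Prod.ext hfst hsub
      exact Subtype.ext (sub_eq_zero.mp this)
    have hsurj : Function.Surjective p2 := by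
      intro ξ
      obtain ⟨η, hR, hann⟩ := hsplit ξ
      exact ⟨⟨(Pi η, ξ), (hmemK (Pi η) ξ).mpr ⟨η, rfl, hR, hann⟩⟩, rfl⟩
    let e : K ≃ₗ[ℝ] Module.Dual ℝ V := LinearEquiv.ofBijective p2 ⟨hinj, hsurj⟩
    let Pi' : Module.Dual ℝ V →ₗ[ℝ] V :=
      ((LinearMap.fst ℝ V (Module.Dual ℝ V)).comp K.subtype).comp e.symm.toLinearMap
    have h2 : ∀ ξ : Module.Dual ℝ V, ((e.symm ξ : K) : V × Module.Dual ℝ V).2 = ξ :=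
      fun ξ => e.apply_symm_apply ξ
    have hPi' : ∀ ξ : Module.Dual ℝ V,
        (Pi' ξ, ξ) = ((e.symm ξ : K) : V × Module.Dual ℝ V) := by
      intro ξ
      exact Prod.ext rfl (h2 ξ).symm
    have hKgraph : K = LinearMap.range
        (Pi'.prod (LinearMap.id : Module.Dual ℝ V →ₗ[ℝ] Module.Dual ℝ V)) := by
      ext ⟨x, ξ⟩
      rw [mem_graph_aux]
      constructor
      · intro h
        have hek : e (⟨(x, ξ), h⟩ : K) = ξ := rfl
        have hsk : e.symm ξ = (⟨(x, ξ), h⟩ : K) := by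
          apply e.injective
          rw [e.apply_symm_apply]
          exact hek.symm
        have : Pi' ξ = ((e.symm ξ : K) : V × Module.Dual ℝ V).1 := rfl
        rw [this, hsk]
      · intro h
        have hm := (e.symm ξ : K).2
        have heq : ((x, ξ) : V × Module.Dual ℝ V) =
            ((e.symm ξ : K) : V × Module.Dual ℝ V) := by
          rw [← hPi' ξ, h]
        rw [heq]
        exact hm
    refine ⟨Pi', ?_, hKgraph⟩
    intro ξ η
    have hmξ : (Pi' ξ, ξ) ∈ K := by rw [hPi' ξ]; exact (e.symm ξ : K).2
    have hmη : (Pi' η, η) ∈ K := by rw [hPi' η]; exact (e.symm η : K).2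
    have h0 := hiso _ hmξ _ hmη
    rw [pairVD_apply] at h0
    have h0' : (ξ (Pi' η) + η (Pi' ξ)) / 2 = 0 := h0
    linarith
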